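/- Let (Q, Σ, δ) be a finite-state semiautomaton, let enc : Q → ℂⁿ be an injective encoding of the states, and for each σ ∈ Σ let A(σ) be an n×n complex matrix satisfying A(σ) · enc(q) = enc(δ(q, σ)) for all q ∈ Q. If the family {A(σ)}_{σ∈Σ} is simultaneously diagonalizable, then the semiautomaton is commutative: δ(δ(q, σ), τ) = δ(δ(q, τ), σ) for all q ∈ Q and all σ, τ ∈ Σ. -/

import Mathlib

open Matrix

theorem Commute.of_units_conj {M : Type*} [Monoid M] (u : Mˣ) {a b : M}
    (h : Commute (↑u⁻¹ * a * u) (↑u⁻¹ * b * u)) : Commute a b := by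
  simpa [Commute, SemiconjBy, mul_assoc] using congrArg (fun x : M => (u : M) * x * ↑u⁻¹) h

namespace Matrix

variable {m R : Type*} [Fintype m] [DecidableEq m]

theorem IsDiag.commute [CommSemiring R] {D E : Matrix m m R} (hD : D.IsDiag) (hE : E.IsDiag) :
    Commute D E := by
  rw [← hD.diagonal_diag, ← hE.diagonal_diag]
  exact commute_diagonal _ _

theorem commute_of_isDiag_conj [CommRing R] {W A B : Matrix m m R} (hW : IsUnit W)
    (hA : (W⁻¹ * A * W).IsDiag) (hB : (W⁻¹ * B * W).IsDiag) : Commute A B := by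
  obtain ⟨u, rfl⟩ := hW
  rw [← coe_units_inv] at hA hB
  exact (hA.commute hB).of_units_conj u

end Matrix

theorem transition_comm_of_commute {m R Q Alph : Type*} [Fintype m] [CommSemiring R]
    {δ : Q → Alph → Q} {enc : Q → m → R} (henc : Function.Injective enc)
    {A : Alph → Matrix m m R} (hA : ∀ σ q, A σ *ᵥ enc q = enc (δ q σ))
    {σ τ : Alph} (hστ : Commute (A σ) (A τ)) (q : Q) :
    δ (δ q σ) τ = δ (δ q τ) σ :=
  henc <| by rw [← hA τ, ← hA σ, ← hA σ, ← hA τ, mulVec_mulVec, mulVec_mulVec, hστ.eq]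

theorem stmt1_general {n : ℕ} {Q Alph : Type*}
    (δ : Q → Alph → Q) (enc : Q → (Fin n → ℂ)) (henc : Function.Injective enc)
    (A : Alph → Matrix (Fin n) (Fin n) ℂ)
    (hA : ∀ (σ : Alph) (q : Q), A σ *ᵥ enc q = enc (δ q σ))
    (W : Matrix (Fin n) (Fin n) ℂ) (hW : IsUnit W)
    (hdiag : ∀ σ : Alph, (W⁻¹ * A σ * W).IsDiag) :
    ∀ (q : Q) (σ τ : Alph), δ (δ q σ) τ = δ (δ q τ) σ := fun q σ τ =>
  transition_comm_of_commute henc hA (commute_of_isDiag_conj hW (hdiag σ) (hdiag τ)) q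

/-- If a finite-state semiautomaton `(Q, Σ, δ)` is emulated (via an injective
encoding `enc : Q → ℂⁿ`) by a selective SSM with zero input term whose transition matrices
`{A σ}` are simultaneously diagonalizable, then the semiautomaton is commutative. -/
theorem stmt1 {n : ℕ} {Q Alph : Type*} [Fintype Q] [Fintype Alph]
    (δ : Q → Alph → Q) (enc : Q → (Fin n → ℂ)) (henc : Function.Injective enc)
    (A : Alph → Matrix (Fin n) (Fin n) ℂ)
    (hA : ∀ (σ : Alph) (q : Q), A σ *ᵥ enc q = enc (δ q σ))
    (W : Matrix (Fin n) (Fin n) ℂ) (hW : IsUnit W)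
    (hdiag : ∀ σ : Alph, (W⁻¹ * A σ * W).IsDiag) :
    ∀ (q : Q) (σ τ : Alph), δ (δ q σ) τ = δ (δ q τ) σ :=
  stmt1_general δ enc henc A hA W hW hdiag
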